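/- arXiv:2405.15980 — 3 statements merged into one kernel-verified Lean document; each statement's English description precedes it below -/
import Mathlib

section
/- Let χ be a non-principal Dirichlet character modulo n. Then for every s ∈ ℂ with Re(s) < 0, the series K(1−s,χ) = ∑_{q≥1} τ(χ,q) q^{−(1−s)} converges absolutely and L(s,χ) = ε(χ) · π^{s−1/2} · n^{−s} · Γ_{e/o}(s;χ) · K(1−s,χ), where L(s,χ) is the analytic continuation of the Dirichlet L-function of χ. -/
open Complex Finset

/-- `Γ_e(s) = Γ((1-s)/2) / Γ(s/2)`. -/
noncomputable def GammaE (s : ℂ) : ℂ := Complex.Gamma ((1 - s) / 2) / Complex.Gamma (s / 2)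

/-- `Γ_o(s) = Γ((2-s)/2) / Γ((s+1)/2)`. -/
noncomputable def GammaO (s : ℂ) : ℂ := Complex.Gamma ((2 - s) / 2) / Complex.Gamma ((s + 1) / 2)

/-- The Gauss sum `τ(χ,q) = ∑_{j mod n} χ(j) e(jq/n)` of a Dirichlet character `χ` mod `n`. -/
noncomputable def tauSum {n : ℕ} (χ : DirichletCharacter ℂ n) (q : ℕ) : ℂ :=
  ∑ j ∈ Finset.range n, χ (j : ZMod n) *
    Complex.exp (2 * Real.pi * Complex.I * j * q / n)

/-! For `Re s < 0` the series `K(1 - s, χ)` is the Dirichlet series at `1 - s` of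
`τ(χ, ·) = χ(-1) • 𝓕 χ`, hence converges absolutely and equals `χ(-1) L(𝓕 χ, 1 - s)`.
The functional equation of completed `L`-functions of parity functions on `ZMod n`,
`Λ(χ, s) = n^{-s} Λ(𝓕 χ, 1 - s)` (with an extra factor `i` for odd `χ`), gives the claim, because
the ratio of the gamma factors `Γℝ(1 - s) / Γℝ(s)`, resp. `Γℝ(2 - s) / Γℝ(s + 1)`, is
`π^{s - 1/2} Γ_e(s)`, resp. `π^{s - 1/2} Γ_o(s)`. -/

open ZMod

lemma Gammaℝ_one_sub_div_Gammaℝ (s : ℂ) :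
    Gammaℝ (1 - s) / Gammaℝ s = (Real.pi : ℂ) ^ (s - 1 / 2) * GammaE s := by
  rw [Gammaℝ_def, Gammaℝ_def, GammaE, mul_div_mul_comm,
    ← cpow_sub _ _ (ofReal_ne_zero.mpr Real.pi_ne_zero)]
  ring_nf

lemma Gammaℝ_two_sub_div_Gammaℝ_add_one (s : ℂ) :
    Gammaℝ (2 - s) / Gammaℝ (s + 1) = (Real.pi : ℂ) ^ (s - 1 / 2) * GammaO s := by
  rw [Gammaℝ_def, Gammaℝ_def, GammaO, mul_div_mul_comm,
    ← cpow_sub _ _ (ofReal_ne_zero.mpr Real.pi_ne_zero)]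
  ring_nf

lemma tauSum_mul_cpow_sub_one {n : ℕ} (χ : DirichletCharacter ℂ n) {s : ℂ} (hs : s ≠ 1) (q : ℕ) :
    tauSum χ q * (q : ℂ) ^ (s - 1) = LSeries.term (tauSum χ ·) (1 - s) q := by
  rw [LSeries.term_of_ne_zero' (sub_ne_zero.2 hs.symm), ← neg_sub, cpow_neg, div_eq_mul_inv]

section GaussSum

variable {n : ℕ} [NeZero n] (χ : DirichletCharacter ℂ n)

lemma tauSum_eq_dft_neg (q : ℕ) : tauSum χ q = 𝓕 χ (-q) := by
  rw [tauSum, dft_apply]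
  refine Finset.sum_nbij' (↑) ZMod.val (by simp) (by simp [ZMod.val_lt])
    (fun j hj => ZMod.val_cast_of_lt (mem_range.1 hj)) (by simp) fun j _ => ?_
  rw [mul_neg, neg_neg, ← Nat.cast_mul, ← Int.cast_natCast (j * q), stdAddChar_coe, smul_eq_mul,
    mul_comm]
  push_cast
  ring_nf

lemma tauSum_eq_mul_dft (q : ℕ) : tauSum χ q = χ (-1) * 𝓕 χ q := by
  have hneg : (fun j => χ (-j)) = fun j => χ (-1) * χ j := by
    ext j
    rw [← map_mul, neg_one_mul]
  rw [tauSum_eq_dft_neg, ← congrFun (dft_comp_neg _), hneg, dft_const_mul]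

lemma tauSum_eq_smul_dft : (tauSum χ ·) = χ (-1) • fun q : ℕ => 𝓕 χ q :=
  funext (tauSum_eq_mul_dft χ)

lemma LSeriesSummable_tauSum {s : ℂ} (hs : 1 < s.re) : LSeriesSummable (tauSum χ ·) s := by
  rw [tauSum_eq_smul_dft]
  exact (LSeriesSummable_of_one_lt_re _ hs).smul _

lemma LSeries_tauSum {s : ℂ} (hs : 1 < s.re) :
    LSeries (tauSum χ ·) s = χ (-1) * ZMod.LFunction (𝓕 χ) s := by
  rw [tauSum_eq_smul_dft, LSeries_smul, LFunction_eq_LSeries _ hs]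

end GaussSum

namespace DirichletCharacter

variable {n : ℕ} [NeZero n] {χ : DirichletCharacter ℂ n}

lemma LFunction_eq_LFunction_dft_of_even (hχ : χ.Even) {s : ℂ} (hs₀ : s ≠ 0) (hs : s.re < 1) :
    LFunction χ s = (Real.pi : ℂ) ^ (s - 1 / 2) * GammaE s / (n : ℂ) ^ s
      * ZMod.LFunction (𝓕 χ) (1 - s) := by
  have hs' : 1 - s ≠ 0 := sub_ne_zero.2 (by rintro rfl; simp at hs)
  have hΓ : Gammaℝ (1 - s) ≠ 0 := Gammaℝ_ne_zero_of_re_pos (by simpa using hs)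
  have hΛ := completedLFunction_one_sub_even hχ.to_fun (1 - s) (.inl hs')
    (.inl (by simpa using hs₀))
  rw [sub_sub_cancel, sub_sub_cancel_left] at hΛ
  rw [LFunction, LFunction_eq_completed_div_gammaFactor_even hχ.to_fun s (.inl hs₀), hΛ,
    LFunction_eq_completed_div_gammaFactor_even (dft_even_iff.mpr hχ.to_fun) _ (.inl hs'),
    ← Gammaℝ_one_sub_div_Gammaℝ, cpow_neg]
  field_simp

lemma LFunction_eq_LFunction_dft_of_odd (hχ : χ.Odd) {s : ℂ} (hs : s.re < 2) :
    LFunction χ s = I * ((Real.pi : ℂ) ^ (s - 1 / 2) * GammaO s) / (n : ℂ) ^ s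
      * ZMod.LFunction (𝓕 χ) (1 - s) := by
  have hΓ : Gammaℝ (2 - s) ≠ 0 :=
    Gammaℝ_ne_zero_of_re_pos (by rw [sub_re, re_ofNat]; linarith)
  have hΛ := completedLFunction_one_sub_odd hχ.to_fun (1 - s)
  rw [sub_sub_cancel, sub_sub_cancel_left] at hΛ
  rw [LFunction, LFunction_eq_completed_div_gammaFactor_odd hχ.to_fun s, hΛ,
    LFunction_eq_completed_div_gammaFactor_odd (dft_odd_iff.mpr hχ.to_fun),
    show 1 - s + 1 = 2 - s by ring, ← Gammaℝ_two_sub_div_Gammaℝ_add_one, cpow_neg]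
  field_simp

end DirichletCharacter

theorem LFunction_eq_gaussSum_series_general
    (n : ℕ) [NeZero n] (χ : DirichletCharacter ℂ n)
    (s : ℂ) (hs : s.re < 0) :
    Summable (fun q : ℕ => ‖tauSum χ q * (q : ℂ) ^ (s - 1)‖) ∧
    DirichletCharacter.LFunction χ s
      = (if χ (-1) = 1 then 1 else -Complex.I) * (Real.pi : ℂ) ^ (s - 1 / 2) / (n : ℂ) ^ s
          * (if χ (-1) = 1 then GammaE s else GammaO s)
          * ∑' q : ℕ, tauSum χ q * (q : ℂ) ^ (s - 1) := by
  have hs₀ : s ≠ 0 := by rintro rfl; simp at hs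
  have hs₁ : 1 < (1 - s).re := by rw [sub_re, one_re]; linarith
  have hterm (q : ℕ) : tauSum χ q * (q : ℂ) ^ (s - 1) = LSeries.term (tauSum χ ·) (1 - s) q :=
    tauSum_mul_cpow_sub_one χ (by rintro rfl; norm_num at hs) q
  refine ⟨by simpa only [hterm] using (LSeriesSummable_tauSum χ hs₁).norm, ?_⟩
  rw [tsum_congr hterm, ← LSeries, LSeries_tauSum χ hs₁]
  rcases χ.even_or_odd with hχ | hχ
  · have hχ' : χ (-1) = 1 := hχ
    rw [χ.LFunction_eq_LFunction_dft_of_even hχ hs₀ (by linarith), if_pos hχ', if_pos hχ', hχ']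
    ring
  · have hχ' : χ (-1) ≠ 1 := by rw [hχ]; norm_num
    rw [χ.LFunction_eq_LFunction_dft_of_odd hχ (by linarith), if_neg hχ', if_neg hχ', hχ]
    ring

/-- **Functional equation for Dirichlet `L`-functions in terms of Gauss sums.**
For any non-principal Dirichlet character `χ` mod `n` and any `s` with `Re s < 0`, the
series `K(1-s,χ) = ∑_{q ≥ 1} τ(χ,q) q^{-(1-s)}` converges absolutely and
`L(s,χ) = ε(χ) π^{s-1/2} n^{-s} Γ_{e/o}(s;χ) K(1-s,χ)`, where `ε(χ) = 1` and
`Γ_{e/o}(s;χ) = Γ_e(s)` if `χ(-1) = 1`, while `ε(χ) = -i` and `Γ_{e/o}(s;χ) = Γ_o(s)`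
if `χ(-1) = -1`. -/
theorem LFunction_eq_gaussSum_series
    (n : ℕ) [NeZero n] (χ : DirichletCharacter ℂ n) (hχ : χ ≠ 1)
    (s : ℂ) (hs : s.re < 0) :
    Summable (fun q : ℕ => ‖tauSum χ q * (q : ℂ) ^ (s - 1)‖) ∧
    DirichletCharacter.LFunction χ s
      = (if χ (-1) = 1 then 1 else -Complex.I) * (Real.pi : ℂ) ^ (s - 1 / 2) / (n : ℂ) ^ s
          * (if χ (-1) = 1 then GammaE s else GammaO s)
          * ∑' q : ℕ, tauSum χ q * (q : ℂ) ^ (s - 1) :=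
  LFunction_eq_gaussSum_series_general n χ s hs
end

section
/- Let l>0 be an odd square-free integer. For all s,w ∈ ℂ with Re(s) > 1 and Re(w) > 1, the double series ∑_{d,m ≥ 1, d and m odd} χ^{(8d)}(ml) m^{−w} d^{−s} converges absolutely and ∑_{d≥1, d odd} L(w, χ^{(8d)}) χ^{(8d)}(l) d^{−s} = ∑_{m≥1, m odd} χ^{(8)}(ml) L^{(2)}(s, χ_{ml}) m^{−w}, where both outer series converge absolutely. -/
open Complex Finset

/-!
Both sides are the two iterated sums of the double series `∑_{d,m odd} (8d/ml) m^{-w} d^{-s}`,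
which converges absolutely because its terms are bounded by `d^{-Re s} m^{-Re w}`. Summing over
`m` first uses `(8d/ml) = (8d/m)(8d/l)`, and `(8d/m) = 0` for even `m`, so the inner sum is the
`L`-series of `χ^{(8d)}`; summing over `d` first uses `(8d/ml) = (8/ml)(d/ml)`.
-/

/-- `L^{(2)}(s, χ_n) = ∑_{k ≥ 1, k odd} (k/n) k^{-s}`: the `L`-function of the Jacobi
symbol `χ_n = (·/n)` with the Euler factor at `2` removed. -/
noncomputable def L2Jacobi (s : ℂ) (n : ℕ) : ℂ :=
  ∑' k : ℕ, if Odd k then (jacobiSym (k : ℤ) n : ℂ) * (k : ℂ) ^ (-s) else 0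

lemma summable_norm_and_tsum_eq_of_summable_norm {β γ E : Type*} [NormedAddCommGroup E]
    [CompleteSpace E] {F : β × γ → E} (hF : Summable fun p => ‖F p‖) {f : β → E} {g : γ → E}
    (hf : ∀ b, f b = ∑' c, F (b, c)) (hg : ∀ c, g c = ∑' b, F (b, c)) :
    Summable (fun b => ‖f b‖) ∧ Summable (fun c => ‖g c‖) ∧ ∑' b, f b = ∑' c, g c := by
  refine ⟨?_, ?_, ?_⟩
  · refine .of_nonneg_of_le (fun _ => norm_nonneg _) (fun b => ?_) hF.prod
    rw [hf b]
    exact norm_tsum_le_tsum_norm (hF.prod_factor b)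
  · refine .of_nonneg_of_le (fun _ => norm_nonneg _) (fun c => ?_) hF.prod_symm.prod
    rw [hg c]
    exact norm_tsum_le_tsum_norm (hF.prod_symm.prod_factor c)
  · rw [tsum_congr hf, tsum_congr hg]
    exact (Summable.tsum_comm (f := fun b c => F (b, c)) hF.of_norm).symm

lemma norm_jacobiSym_le_one (a : ℤ) (b : ℕ) : ‖(jacobiSym a b : ℂ)‖ ≤ 1 := by
  rcases jacobiSym.trichotomy a b with h | h | h <;> simp [h]

lemma jacobiSym_eq_zero_of_two_dvd {a : ℤ} {b : ℕ} (ha : 2 ∣ a) (hb : 2 ∣ b) (hb0 : b ≠ 0) :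
    jacobiSym a b = 0 := by
  refine jacobiSym.eq_zero_iff.mpr ⟨hb0, fun hg => ?_⟩
  have : (2 : ℤ) ∣ (a.gcd b : ℤ) := Int.dvd_coe_gcd ha (by exact_mod_cast hb)
  rw [hg] at this
  norm_num at this

lemma DirichletCharacter.LFunction_eq_LSeries_jacobiSym {N : ℕ} [NeZero N]
    (ψ : DirichletCharacter ℂ N) {a : ℤ} (hψ : ∀ n : ℕ, ψ n = jacobiSym a n) {w : ℂ}
    (hw : 1 < w.re) : ψ.LFunction w = LSeries (fun n => (jacobiSym a n : ℂ)) w := by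
  rw [ψ.LFunction_eq_LSeries hw]
  simp_rw [hψ]

noncomputable def doubleTerm (l : ℕ) (s w : ℂ) (p : ℕ × ℕ) : ℂ :=
  if Odd p.1 ∧ Odd p.2 then
    (jacobiSym (8 * p.1) (p.2 * l) : ℂ) * (p.2 : ℂ) ^ (-w) * (p.1 : ℂ) ^ (-s)
  else 0

lemma norm_doubleTerm_le (l : ℕ) (s w : ℂ) (p : ℕ × ℕ) :
    ‖doubleTerm l s w p‖ ≤ (p.1 : ℝ) ^ (-s.re) * (p.2 : ℝ) ^ (-w.re) := by
  obtain ⟨d, m⟩ := p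
  unfold doubleTerm
  split_ifs with h
  · rw [norm_mul, norm_mul, norm_natCast_cpow_of_pos h.1.pos,
      norm_natCast_cpow_of_pos h.2.pos, neg_re, neg_re]
    calc _ ≤ 1 * (m : ℝ) ^ (-w.re) * (d : ℝ) ^ (-s.re) := by
          gcongr
          exact norm_jacobiSym_le_one _ _
      _ = _ := by ring
  · rw [norm_zero]
    positivity

lemma summable_norm_doubleTerm (l : ℕ) {s w : ℂ} (hs : 1 < s.re) (hw : 1 < w.re) :
    Summable fun p => ‖doubleTerm l s w p‖ := by
  have hS : Summable fun d : ℕ => (d : ℝ) ^ (-s.re) := Real.summable_nat_rpow.mpr (by linarith)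
  have hW : Summable fun m : ℕ => (m : ℝ) ^ (-w.re) := Real.summable_nat_rpow.mpr (by linarith)
  exact .of_nonneg_of_le (fun _ => norm_nonneg _) (norm_doubleTerm_le l s w)
    (hS.mul_of_nonneg hW (fun _ => by positivity) (fun _ => by positivity))

lemma LSeries_jacobiSym_mul_eq_tsum_doubleTerm {l d : ℕ} (hl : l ≠ 0) (hd : Odd d) (s w : ℂ) :
    LSeries (fun n => (jacobiSym (8 * d) n : ℂ)) w * jacobiSym (8 * d) l * (d : ℂ) ^ (-s)
      = ∑' m, doubleTerm l s w (d, m) := by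
  rw [LSeries, ← tsum_mul_right, ← tsum_mul_right]
  refine tsum_congr fun m => ?_
  rcases eq_or_ne m 0 with rfl | hm0
  · simp [doubleTerm]
  rw [LSeries.term_of_ne_zero hm0, doubleTerm]
  by_cases hm : Odd m
  · rw [if_pos ⟨hd, hm⟩, jacobiSym.mul_right' _ hm0 hl, cpow_neg, cpow_neg]
    push_cast
    ring
  · have hm2 : 2 ∣ m := (Nat.not_odd_iff_even.mp hm).two_dvd
    rw [jacobiSym_eq_zero_of_two_dvd ⟨4 * d, by ring⟩ hm2 hm0, if_neg (by tauto)]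
    simp

lemma jacobiSym_mul_L2Jacobi_eq_tsum_doubleTerm (l : ℕ) {m : ℕ} (hm : Odd m) (s w : ℂ) :
    (jacobiSym 8 (m * l) : ℂ) * L2Jacobi s (m * l) * (m : ℂ) ^ (-w)
      = ∑' d, doubleTerm l s w (d, m) := by
  rw [L2Jacobi, ← tsum_mul_left, ← tsum_mul_right]
  refine tsum_congr fun d => ?_
  by_cases hd : Odd d
  · rw [doubleTerm, if_pos hd, if_pos ⟨hd, hm⟩, jacobiSym.mul_left]
    push_cast
    ring
  · rw [doubleTerm, if_neg hd, if_neg (by tauto)]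
    ring

/-- **The double Dirichlet series `A(s,w;l)`.**
Let `l > 0` be odd and squarefree and let `χ d` be the Kronecker symbol character
`χ^{(8d)} = (8d/·)` modulo `8d` (hypothesis `hχ`).  For `Re s > 1` and `Re w > 1` the
double series `∑_{d,m odd} χ^{(8d)}(ml) m^{-w} d^{-s}` converges absolutely and
`∑_{d odd} L(w,χ^{(8d)}) χ^{(8d)}(l) d^{-s} = ∑_{m odd} χ^{(8)}(ml) L^{(2)}(s,χ_{ml}) m^{-w}`,
both outer series converging absolutely. -/
theorem doubleDirichletSeries_eq
    (χ : (d : ℕ) → DirichletCharacter ℂ (8 * d))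
    (hχ : ∀ d : ℕ, Odd d → ∀ n : ℕ, χ d (n : ZMod (8 * d)) = (jacobiSym (8 * d) n : ℂ))
    (l : ℕ) (hl_odd : Odd l)
    (s w : ℂ) (hs : 1 < s.re) (hw : 1 < w.re) :
    Summable (fun p : ℕ × ℕ =>
      ‖if Odd p.1 ∧ Odd p.2 then
          (jacobiSym (8 * p.1) (p.2 * l) : ℂ) * (p.2 : ℂ) ^ (-w) * (p.1 : ℂ) ^ (-s)
        else 0‖)
    ∧ Summable (fun d : ℕ =>
        ‖if h : Odd d then
            (@DirichletCharacter.LFunction (8 * d)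
                ⟨by rcases h with ⟨k, rfl⟩; omega⟩ (χ d) w)
              * (jacobiSym (8 * d) l : ℂ) * (d : ℂ) ^ (-s)
          else 0‖)
    ∧ Summable (fun m : ℕ =>
        ‖if Odd m then (jacobiSym 8 (m * l) : ℂ) * L2Jacobi s (m * l) * (m : ℂ) ^ (-w)
          else 0‖)
    ∧ (∑' d : ℕ, if h : Odd d then
          (@DirichletCharacter.LFunction (8 * d)
              ⟨by rcases h with ⟨k, rfl⟩; omega⟩ (χ d) w)
            * (jacobiSym (8 * d) l : ℂ) * (d : ℂ) ^ (-s)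
        else 0)
      = ∑' m : ℕ, if Odd m then
          (jacobiSym 8 (m * l) : ℂ) * L2Jacobi s (m * l) * (m : ℂ) ^ (-w)
        else 0 := by
  have hF := summable_norm_doubleTerm l hs hw
  refine ⟨hF, summable_norm_and_tsum_eq_of_summable_norm hF (fun d => ?_) (fun m => ?_)⟩
  · split_ifs with hd
    · have : NeZero d := ⟨hd.pos.ne'⟩
      rw [(χ d).LFunction_eq_LSeries_jacobiSym (hχ d hd) hw]
      exact LSeries_jacobiSym_mul_eq_tsum_doubleTerm hl_odd.pos.ne' hd s w
    · simp [doubleTerm, hd]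
  · split_ifs with hm
    · exact jacobiSym_mul_L2Jacobi_eq_tsum_doubleTerm l hm s w
    · simp [doubleTerm, hm]
end

section
/- Let l>0 be an odd square-free integer. For all s,w ∈ ℂ with Re(s) > 1 and Re(w) > 1/2, one has ∑_{m≥1, m odd, ml a perfect square} χ^{(8)}(ml) L^{(2)}(s, χ_{ml}) m^{−w} = ζ^{(2)}(2w) · L^{(2)}(s, χ_{l²}) / ( l^{w} · L^{(2)}(2w+s, χ_{l²}) ), where the series on the left converges absolutely. -/
open Complex Finset

/-- `ζ^{(c)}(s)`: the Riemann zeta function with the Euler factors at primes dividing `c`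
removed. -/
noncomputable def zetaE (c : ℕ) (s : ℂ) : ℂ :=
  riemannZeta s * ∏ p ∈ c.primeFactors, (1 - (p : ℂ) ^ (-s))

/-! Since `l` is squarefree, `ml` is a square exactly when `m = l k²`. For odd `k`, the symbol
`χ^{(8)}((lk)²)` is `1` and `L^{(2)}(s, χ_{(lk)²})` is the `L`-series of the trivial character
mod `2lk`, so the sum is `l^{-w} ∑_k α(k) ∑_{(n,k)=1} β(n)` with the completely multiplicative
`α(k) = χ₂(k) k^{-2w}` and `β(n) = χ_{2l}(n) n^{-s}`. Detecting `(n,k) = 1` by Möbius inversion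
and exchanging the sums gives `(∑ α)(∑ β)(∑ μαβ)`, and `∑ μαβ = 1 / ∑ αβ` because `αβ` is again
completely multiplicative. -/

open LSeries ArithmeticFunction
open scoped LSeries.notation ArithmeticFunction.Moebius

lemma tsum_convolution {f g : ℕ → ℂ} (hf : Summable (‖f ·‖)) (hg : Summable (‖g ·‖))
    (hf₀ : f 0 = 0) (hg₀ : g 0 = 0) :
    ∑' n, (f ⍟ g) n = (∑' n, f n) * ∑' n, g n := by
  have term_zero_eq {h : ℕ → ℂ} (h₀ : h 0 = 0) : term h 0 = h := by
    ext n
    simp [term_def₀ h₀]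
  have hL := LSeries_convolution' (s := 0)
    (by rw [LSeriesSummable, term_zero_eq hf₀]; exact hf.of_norm)
    (by rw [LSeriesSummable, term_zero_eq hg₀]; exact hg.of_norm)
  simpa only [LSeries, term_zero_eq hf₀, term_zero_eq hg₀,
    term_zero_eq (convolution_map_zero f g)] using hL

lemma sum_divisors_ite_dvd_moebius {n : ℕ} (hn : n ≠ 0) (k : ℕ) :
    ∑ d ∈ n.divisors, (if d ∣ k then (μ d : ℂ) else 0) = if n.Coprime k then 1 else 0 := by
  have hfilter : n.divisors.filter (· ∣ k) = (n.gcd k).divisors := by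
    ext d
    simp [Nat.dvd_gcd_iff, hn, Nat.gcd_ne_zero_left hn]
  rw [← Finset.sum_filter, hfilter]
  have h := congrArg (· (n.gcd k)) (coe_moebius_mul_coe_zeta (R := ℂ))
  simp only [coe_mul_zeta_apply, one_apply, intCoe_apply] at h
  simpa only [Nat.coprime_iff_gcd_eq_one] using h

lemma summable_norm_mul_tsum_ite_coprime {α β : ℕ → ℂ} (hα : Summable (‖α ·‖))
    (hβ : Summable (‖β ·‖)) :
    Summable (fun k => ‖α k * ∑' n, if n.Coprime k then β n else 0‖) := by
  have hbound (k : ℕ) : ‖∑' n, if n.Coprime k then β n else 0‖ ≤ ∑' n, ‖β n‖ := by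
    have hle (n : ℕ) : ‖if n.Coprime k then β n else 0‖ ≤ ‖β n‖ := by
      split_ifs <;> simp
    have hsum := hβ.of_nonneg_of_le (fun _ => norm_nonneg _) hle
    exact (norm_tsum_le_tsum_norm hsum).trans (hsum.tsum_le_tsum hle hβ)
  refine (hα.mul_right (∑' n, ‖β n‖)).of_nonneg_of_le (fun _ => norm_nonneg _) fun k => ?_
  rw [norm_mul]
  exact mul_le_mul_of_nonneg_left (hbound k) (norm_nonneg _)

namespace MonoidWithZeroHom

variable (f : ℕ →*₀ ℂ)

lemma mul_convolution_distrib (g h : ℕ → ℂ) : (⇑f * g) ⍟ (⇑f * h) = ⇑f * (g ⍟ h) := by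
  ext n
  simp only [Pi.mul_apply, convolution_def, Finset.mul_sum]
  refine Finset.sum_congr rfl fun p hp => ?_
  rw [← (Nat.mem_divisorsAntidiagonal.mp hp).1, map_mul]
  ring

lemma convolution_mul_moebius : ⇑f ⍟ (⇑f * ↗μ) = δ := by
  have hμ : (1 : ℕ → ℂ) ⍟ ↗μ = δ := by
    rw [one_convolution_eq_zeta_convolution, ← one_eq_delta]
    simp_rw [← natCoe_apply, ← intCoe_apply, ArithmeticFunction.coe_mul, coe_zeta_mul_coe_moebius]
  nth_rewrite 1 [← mul_one ⇑f]
  rw [mul_convolution_distrib, hμ]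
  exact LSeries.mul_delta f.map_one

lemma tsum_mul_tsum_mul_moebius (hf : Summable (‖f ·‖)) :
    (∑' n, f n) * ∑' n, f n * μ n = 1 := by
  have hfμ : Summable (fun n => ‖f n * μ n‖) := by
    refine hf.of_nonneg_of_le (fun _ => norm_nonneg _) fun n => ?_
    rw [norm_mul, Complex.norm_intCast]
    exact mul_le_of_le_one_right (norm_nonneg _) (mod_cast abs_moebius_le_one)
  have h := tsum_convolution hf hfμ f.map_zero (by simp)
  rw [show (⇑f ⍟ fun n => f n * (μ n : ℂ)) = δ from f.convolution_mul_moebius] at h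
  simp [← h, delta]

lemma tsum_ite_dvd {d : ℕ} (hd : d ≠ 0) :
    ∑' k, (if d ∣ k then f k else 0) = f d * ∑' k, f k := by
  rw [← (mul_right_injective₀ hd).tsum_eq, ← tsum_mul_left]
  · simp
  · intro k hk
    by_contra hk'
    exact hk (if_neg fun ⟨i, hi⟩ => hk' ⟨i, hi.symm⟩)

lemma tsum_ite_coprime (hf : Summable (‖f ·‖)) {n : ℕ} (hn : n ≠ 0) :
    ∑' k, (if n.Coprime k then f k else 0) = (∑ d ∈ n.divisors, μ d * f d) * ∑' k, f k := by
  have hsum (d : ℕ) : Summable (fun k => if d ∣ k then (μ d : ℂ) * f k else 0) := by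
    refine (hf.mul_left ‖(μ d : ℂ)‖).of_norm_bounded fun k => ?_
    split_ifs <;> simp [mul_nonneg]
  calc ∑' k, (if n.Coprime k then f k else 0)
      = ∑' k, ∑ d ∈ n.divisors, (if d ∣ k then (μ d : ℂ) * f k else 0) := by
        refine tsum_congr fun k => ?_
        simp_rw [← ite_zero_mul, ← Finset.sum_mul, sum_divisors_ite_dvd_moebius hn, ite_zero_mul,
          one_mul]
    _ = ∑ d ∈ n.divisors, μ d * (f d * ∑' k, f k) := by
        rw [Summable.tsum_finsetSum fun d _ => hsum d]
        refine Finset.sum_congr rfl fun d hd => ?_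
        simp_rw [← mul_ite_zero, tsum_mul_left, f.tsum_ite_dvd ((Nat.pos_of_mem_divisors hd).ne')]
    _ = (∑ d ∈ n.divisors, μ d * f d) * ∑' k, f k := by
        rw [Finset.sum_mul]
        simp_rw [mul_assoc]

lemma tsum_mul_tsum_ite_coprime (α β : ℕ →*₀ ℂ) (hα : Summable (‖α ·‖))
    (hβ : Summable (‖β ·‖)) :
    ∑' k, α k * ∑' n, (if n.Coprime k then β n else 0)
      = (∑' n, α n) * (∑' n, β n) / ∑' n, α n * β n := by
  have hαβ_apply (n : ℕ) : (α * β) n = α n * β n := rfl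
  have hαβ : Summable (fun n => ‖α n * β n‖) := by
    have hdiag : Function.Injective fun n : ℕ => (n, n) := fun a b h => congrArg Prod.fst h
    simpa only [Function.comp_def] using (hα.mul_norm hβ).comp_injective hdiag
  have hinv : (∑' n, α n * β n) * ∑' n, α n * β n * μ n = 1 := by
    simpa only [hαβ_apply] using (α * β).tsum_mul_tsum_mul_moebius (by simpa only [hαβ_apply])
  set γ : ℕ → ℂ := fun n => α n * β n * μ n
  have hγ : Summable (‖γ ·‖) := by
    refine hαβ.of_nonneg_of_le (fun _ => norm_nonneg _) fun n => ?_
    rw [norm_mul, Complex.norm_intCast]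
    exact mul_le_of_le_one_right (norm_nonneg _) (mod_cast abs_moebius_le_one)
  have hswap : ∑' k, α k * ∑' n, (if n.Coprime k then β n else 0)
      = ∑' n, β n * ∑' k, (if n.Coprime k then α k else 0) := by
    have hsum : Summable (Function.uncurry fun k n => α k * if n.Coprime k then β n else 0) :=
      (hα.mul_norm hβ).of_norm_bounded fun p => by
        simp only [Function.uncurry]; split_ifs <;> simp [mul_nonneg]
    simp_rw [← tsum_mul_left, ← (Summable.tsum_comm hsum), mul_ite_zero, mul_comm (α _)]
  have hmoebius (n : ℕ) : β n * ∑' k, (if n.Coprime k then α k else 0)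
      = (γ ⍟ β) n * ∑' k, α k := by
    rcases eq_or_ne n 0 with rfl | hn
    · simp
    rw [α.tsum_ite_coprime hα hn, ← mul_assoc, convolution_def]
    dsimp only
    rw [Nat.sum_divisorsAntidiagonal (fun d e => γ d * β e), Finset.mul_sum]
    congr 1
    refine Finset.sum_congr rfl fun d hd => ?_
    rw [← Nat.mul_div_cancel' (Nat.dvd_of_mem_divisors hd), map_mul,
      Nat.mul_div_cancel_left _ (Nat.pos_of_mem_divisors hd)]
    ring
  rw [hswap, tsum_congr hmoebius, tsum_mul_right, tsum_convolution hγ hβ (by simp [γ]) β.map_zero,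
    eq_div_iff (left_ne_zero_of_mul_eq_one hinv)]
  linear_combination (∑' n, α n) * (∑' n, β n) * hinv

end MonoidWithZeroHom

namespace DirichletCharacter

lemma one_apply_natCast (N n : ℕ) :
    (1 : DirichletCharacter ℂ N) n = if n.Coprime N then 1 else 0 := by
  split_ifs with h
  · exact MulChar.one_apply ((ZMod.isUnit_iff_coprime n N).mpr h)
  · exact MulChar.map_nonunit _ (by rwa [ZMod.isUnit_iff_coprime])

-- `LSeries.term` vanishes at `0`, so this is multiplicative with zero even for `N = 1`.
noncomputable def termHom {N : ℕ} (χ : DirichletCharacter ℂ N) (s : ℂ) : ℕ →*₀ ℂ where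
  toFun := term ↗χ s
  map_zero' := term_zero _ _
  map_one' := by simp
  map_mul' m n := by
    rcases eq_or_ne m 0 with rfl | hm
    · simp
    rcases eq_or_ne n 0 with rfl | hn
    · simp
    simp [hm, hn, natCast_mul_natCast_cpow, mul_div_mul_comm]

lemma termHom_apply {N : ℕ} (χ : DirichletCharacter ℂ N) (s : ℂ) (n : ℕ) :
    χ.termHom s n = term ↗χ s n :=
  rfl

lemma tsum_termHom {N : ℕ} (χ : DirichletCharacter ℂ N) (s : ℂ) :
    ∑' n, χ.termHom s n = LSeries ↗χ s :=
  rfl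

lemma summable_norm_termHom {N : ℕ} (χ : DirichletCharacter ℂ N) {s : ℂ} (hs : 1 < s.re) :
    Summable (‖χ.termHom s ·‖) :=
  (χ.LSeriesSummable_of_one_lt_re hs).norm

lemma termHom_one_mul_termHom_one {M N : ℕ} (hMN : M ∣ N) (a b : ℂ) (n : ℕ) :
    (1 : DirichletCharacter ℂ M).termHom a n * (1 : DirichletCharacter ℂ N).termHom b n
      = (1 : DirichletCharacter ℂ N).termHom (a + b) n := by
  simp only [termHom_apply]
  rcases eq_or_ne n 0 with rfl | hn
  · simp
  have hn' : (n : ℂ) ≠ 0 := Nat.cast_ne_zero.mpr hn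
  simp only [term_of_ne_zero hn, one_apply_natCast, cpow_add _ _ hn']
  by_cases h : n.Coprime N
  · rw [if_pos h, if_pos (Nat.Coprime.coprime_dvd_right hMN h), div_mul_div_comm, one_mul]
  · simp [h]

end DirichletCharacter

lemma zetaE_eq_LSeries (N : ℕ) [NeZero N] {z : ℂ} (hz : 1 < z.re) :
    zetaE N z = LSeries ↗(1 : DirichletCharacter ℂ N) z := by
  have hz1 : z ≠ 1 := by
    rintro rfl
    simp at hz
  rw [← DirichletCharacter.LFunction_eq_LSeries _ hz, ← DirichletCharacter.LFunctionTrivChar,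
    DirichletCharacter.LFunctionTrivChar_eq_mul_riemannZeta hz1, zetaE, mul_comm]

lemma jacobiSym.sq_right (a : ℤ) {b : ℕ} (hb : b ≠ 0) :
    jacobiSym a (b ^ 2) = if a.gcd b = 1 then 1 else 0 := by
  have : NeZero b := ⟨hb⟩
  rw [jacobiSym.pow_right]
  split_ifs with h
  · exact jacobiSym.sq_one h
  · rw [jacobiSym.eq_zero_iff_not_coprime.mpr h]
    norm_num

lemma L2Jacobi_sq {n : ℕ} (hn : Odd n) (z : ℂ) :
    L2Jacobi z (n ^ 2) = LSeries ↗(1 : DirichletCharacter ℂ (2 * n)) z := by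
  refine tsum_congr fun k => ?_
  have hχ₀ : (1 : DirichletCharacter ℂ (2 * n)) (0 : ℕ) = 0 := by
    rw [DirichletCharacter.one_apply_natCast, if_neg]
    simp
  rw [term_def₀ hχ₀, jacobiSym.sq_right _ hn.pos.ne', DirichletCharacter.one_apply_natCast,
    Int.gcd_natCast_natCast]
  by_cases hk : Odd k
  · simp [hk, Nat.coprime_mul_iff_right, Nat.coprime_two_right.mpr hk, Nat.Coprime]
  · have hk' : ¬ k.Coprime (2 * n) := fun h =>
      hk (Nat.coprime_two_right.mp (Nat.coprime_mul_iff_right.mp h).1)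
    simp [hk, hk']

lemma Squarefree.exists_eq_mul_sq_of_isSquare_mul {l m : ℕ} (hl : Squarefree l)
    (h : IsSquare (m * l)) : ∃ k, l * k ^ 2 = m := by
  obtain ⟨r, hr⟩ := h
  obtain ⟨k, rfl⟩ : l ∣ r := (hl.dvd_pow_iff_dvd two_ne_zero).mp ⟨m, by rw [sq, ← hr, mul_comm]⟩
  exact ⟨k, mul_right_cancel₀ hl.ne_zero (by rw [hr]; ring)⟩

noncomputable def squareTerm (l : ℕ) (s w : ℂ) (m : ℕ) : ℂ :=
  if Odd m ∧ IsSquare (m * l) then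
    (jacobiSym 8 (m * l) : ℂ) * L2Jacobi s (m * l) * (m : ℂ) ^ (-w)
  else 0

lemma squareTerm_eq_zero_of_notMem_range {l : ℕ} (hl : Squarefree l) (s w : ℂ) {m : ℕ}
    (hm : m ∉ Set.range fun k => l * k ^ 2) : squareTerm l s w m = 0 :=
  if_neg fun h => hm (hl.exists_eq_mul_sq_of_isSquare_mul h.2)

lemma L2Jacobi_mul_sq {l k : ℕ} (hl : Odd l) (hk : Odd k) (s : ℂ) :
    L2Jacobi s ((l * k) ^ 2)
      = ∑' n, if n.Coprime k then (1 : DirichletCharacter ℂ (2 * l)).termHom s n else 0 := by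
  rw [L2Jacobi_sq (hl.mul hk)]
  refine tsum_congr fun n => ?_
  rw [DirichletCharacter.termHom_apply]
  rcases eq_or_ne n 0 with rfl | hn
  · simp
  simp only [term_of_ne_zero hn, DirichletCharacter.one_apply_natCast, ← mul_assoc,
    Nat.coprime_mul_iff_right]
  by_cases h : n.Coprime k
  · simp only [and_iff_left h, if_pos h]
  · rw [if_neg fun h' => h h'.2, if_neg h, zero_div]

lemma squareTerm_mul_sq {l : ℕ} (hl : Odd l) (s w : ℂ) (k : ℕ) :
    squareTerm l s w (l * k ^ 2) = (l : ℂ) ^ (-w) * ((1 : DirichletCharacter ℂ 2).termHom (2 * w) k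
      * ∑' n, if n.Coprime k then (1 : DirichletCharacter ℂ (2 * l)).termHom s n else 0) := by
  rw [DirichletCharacter.termHom_apply]
  rcases Nat.even_or_odd k with hk | hk
  · have hlk : ¬ Odd (l * k ^ 2) := by
      rw [Nat.not_odd_iff_even]
      exact Nat.even_mul.mpr (Or.inr (Nat.even_pow.mpr ⟨hk, two_ne_zero⟩))
    have hk2 : ¬ k.Coprime 2 := by rwa [Nat.coprime_two_right, Nat.not_odd_iff_even]
    rw [squareTerm, if_neg fun h => hlk h.1, term_def, DirichletCharacter.one_apply_natCast,
      if_neg hk2]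
    simp
  have hlk : Odd (l * k) := hl.mul hk
  have hsq : l * k ^ 2 * l = (l * k) ^ 2 := by ring
  have h8 : jacobiSym 8 ((l * k) ^ 2) = 1 := by
    rw [jacobiSym.sq_right _ hlk.pos.ne', if_pos]
    exact_mod_cast (Nat.coprime_two_left.mpr hlk).pow_left 3
  have hterm : term ↗(1 : DirichletCharacter ℂ 2) (2 * w) k = ((k : ℂ) ^ (2 * w))⁻¹ := by
    rw [term_of_ne_zero hk.pos.ne', DirichletCharacter.one_apply_natCast,
      if_pos (Nat.coprime_two_right.mpr hk), one_div]
  have hpow : ((l * k ^ 2 : ℕ) : ℂ) ^ (-w) = (l : ℂ) ^ (-w) * ((k : ℂ) ^ (2 * w))⁻¹ := by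
    rw [Nat.cast_mul, natCast_mul_natCast_cpow, Nat.cast_pow, ← natCast_cpow_natCast_mul,
      Nat.cast_ofNat, mul_neg, cpow_neg (k : ℂ)]
  rw [squareTerm, if_pos ⟨hl.mul hk.pow, hsq ▸ IsSquare.sq (l * k)⟩, hsq, h8, L2Jacobi_mul_sq hl hk,
    hpow, hterm]
  push_cast
  ring

/-- **The square-term contribution.**
Let `l > 0` be odd and squarefree.  For `Re s > 1` and `Re w > 1/2`, the series
`∑_{m odd, ml = □} χ^{(8)}(ml) L^{(2)}(s,χ_{ml}) m^{-w}` converges absolutely and equals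
`ζ^{(2)}(2w) L^{(2)}(s,χ_{l²}) / (l^w L^{(2)}(2w+s,χ_{l²}))`. -/
theorem squareTerms_eq
    (l : ℕ) (hl_odd : Odd l) (hl_sqf : Squarefree l)
    (s w : ℂ) (hs : 1 < s.re) (hw : 1 / 2 < w.re) :
    Summable (fun m : ℕ =>
      ‖if Odd m ∧ IsSquare (m * l) then
          (jacobiSym 8 (m * l) : ℂ) * L2Jacobi s (m * l) * (m : ℂ) ^ (-w)
        else 0‖)
    ∧ (∑' m : ℕ, if Odd m ∧ IsSquare (m * l) then
          (jacobiSym 8 (m * l) : ℂ) * L2Jacobi s (m * l) * (m : ℂ) ^ (-w)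
        else 0)
      = zetaE 2 (2 * w) * L2Jacobi s (l ^ 2)
          / ((l : ℂ) ^ w * L2Jacobi (2 * w + s) (l ^ 2)) := by
  let α := (1 : DirichletCharacter ℂ 2).termHom (2 * w)
  let β := (1 : DirichletCharacter ℂ (2 * l)).termHom s
  have hα : Summable (‖α ·‖) := DirichletCharacter.summable_norm_termHom _ (by simp; linarith)
  have hβ : Summable (‖β ·‖) := DirichletCharacter.summable_norm_termHom _ hs
  have hinj : Function.Injective fun k : ℕ => l * k ^ 2 := fun a b h =>
    Nat.pow_left_injective two_ne_zero (mul_left_cancel₀ hl_sqf.ne_zero h)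
  have hsupp m (hm : m ∉ Set.range fun k => l * k ^ 2) : squareTerm l s w m = 0 :=
    squareTerm_eq_zero_of_notMem_range hl_sqf s w hm
  change Summable (fun m => ‖squareTerm l s w m‖) ∧ ∑' m, squareTerm l s w m = _
  constructor
  · refine (hinj.summable_iff (f := fun m => ‖squareTerm l s w m‖) fun m hm => ?_).mp ?_
    · rw [hsupp m hm, norm_zero]
    simp only [Function.comp_def, squareTerm_mul_sq hl_odd, norm_mul (_ ^ _)]
    exact (summable_norm_mul_tsum_ite_coprime hα hβ).mul_left _
  rw [← hinj.tsum_eq (Function.support_subset_iff'.mpr hsupp)]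
  simp only [squareTerm_mul_sq hl_odd]
  rw [tsum_mul_left, α.tsum_mul_tsum_ite_coprime β hα hβ]
  simp only [α, β, DirichletCharacter.termHom_one_mul_termHom_one (dvd_mul_right 2 l),
    DirichletCharacter.tsum_termHom]
  rw [zetaE_eq_LSeries 2 (by simp; linarith), L2Jacobi_sq hl_odd, L2Jacobi_sq hl_odd, cpow_neg]
  ring
end
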